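/- arXiv:1910.06716 — 5 statements merged into one kernel-verified Lean document; each statement's English description precedes it below -/
import Mathlib

section
/- For all natural numbers i and all real t ≥ 0, if in every interval (s, s+D] the number of servers entering plus leaving is at most α·NS(s), then the number of servers entering during (t, t+D·i] is at most ((1+α)^i − 1)·NS(t), and (1−α)^i·NS(t) ≤ NS(t+D·i) ≤ (1+α)^i·NS(t). -/
/-!
In one window of length `D` the churn bound caps both the enters and the leaves by `α · NS`, so
the size changes by a factor between `1 - α` and `1 + α` per window. Iterating gives the size
bounds, and the enters over `i` windows are at most `α · ∑_{k < i} (1 + α)^k · NS t`, which is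
the geometric sum `((1 + α)^i - 1) · NS t`.
-/

theorem le_one_add_pow_sub_one_mul {a x : ℕ → ℝ} {α : ℝ} (hα : 0 ≤ α) (ha₀ : a 0 = 0)
    (hx : ∀ k, x k ≤ (1 + α) ^ k * x 0) (ha : ∀ k, a (k + 1) ≤ a k + α * x k) (n : ℕ) :
    a n ≤ ((1 + α) ^ n - 1) * x 0 := by
  induction n with
  | zero => simp [ha₀]
  | succ n ih =>
    calc a (n + 1) ≤ a n + α * x n := ha n
      _ ≤ ((1 + α) ^ n - 1) * x 0 + α * ((1 + α) ^ n * x 0) := by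
        gcongr
        exact hx n
      _ = ((1 + α) ^ (n + 1) - 1) * x 0 := by ring

section Churn

variable {NS : ℝ → ℝ} {E L : ℝ → ℝ → ℝ} {D α : ℝ}

theorem churn_one_window (hD : 0 < D)
    (hNS : ∀ t t', t ≤ t' → NS t' = NS t + E t t' - L t t')
    (hEnn : ∀ t t', t ≤ t' → 0 ≤ E t t')
    (hLnn : ∀ t t', t ≤ t' → 0 ≤ L t t')
    (hchurn : ∀ t, 0 ≤ t → E t (t + D) + L t (t + D) ≤ α * NS t) {s : ℝ} (hs : 0 ≤ s) :
    E s (s + D) ≤ α * NS s ∧ (1 - α) * NS s ≤ NS (s + D) ∧ NS (s + D) ≤ (1 + α) * NS s := by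
  have hle : s ≤ s + D := by linarith
  have hsize := hNS s (s + D) hle
  have hE := hEnn s (s + D) hle
  have hL := hLnn s (s + D) hle
  have hsum := hchurn s hs
  exact ⟨by linarith, by linarith, by linarith⟩

end Churn

theorem churn_size_bounds_general
    (NS : ℝ → ℝ) (E L : ℝ → ℝ → ℝ) (D α : ℝ)
    (hD : 0 < D) (hα0 : 0 < α) (hα1 : α < 1)
    (hNS : ∀ t t', t ≤ t' → NS t' = NS t + E t t' - L t t')
    (hEnn : ∀ t t', t ≤ t' → 0 ≤ E t t')
    (hLnn : ∀ t t', t ≤ t' → 0 ≤ L t t')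
    (hEadd : ∀ t u v, t ≤ u → u ≤ v → E t v = E t u + E u v)
    (hchurn : ∀ t, 0 ≤ t → E t (t + D) + L t (t + D) ≤ α * NS t) :
    ∀ (i : ℕ) (t : ℝ), 0 ≤ t →
      E t (t + D * i) ≤ ((1 + α) ^ i - 1) * NS t ∧
      (1 - α) ^ i * NS t ≤ NS (t + D * i) ∧
      NS (t + D * i) ≤ (1 + α) ^ i * NS t := by
  intro i t ht
  have hwindow (k : ℕ) := churn_one_window hD hNS hEnn hLnn hchurn (s := t + D * k) (by positivity)
  have hnext (k : ℕ) : t + D * (k + 1 : ℕ) = t + D * k + D := by push_cast; ring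
  have hgrowth (k : ℕ) : NS (t + D * k) ≤ (1 + α) ^ k * NS (t + D * (0 : ℕ)) :=
    le_geom (u := fun k : ℕ ↦ NS (t + D * k)) (by linarith) k
      fun j _ ↦ hnext j ▸ (hwindow j).2.2
  refine ⟨?_, ?_, ?_⟩
  · have hsplit (k : ℕ) : E t (t + D * (k + 1 : ℕ)) ≤ E t (t + D * k) + α * NS (t + D * k) := by
      rw [hnext k, hEadd t (t + D * k) (t + D * k + D) (le_add_of_nonneg_right (by positivity))
        (by linarith)]
      gcongr
      exact (hwindow k).1
    have hempty : E t (t + D * (0 : ℕ)) = 0 := by simpa using (hEadd t t t le_rfl le_rfl).symm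
    simpa using le_one_add_pow_sub_one_mul (a := fun k : ℕ ↦ E t (t + D * k)) hα0.le hempty
      hgrowth hsplit i
  · simpa using geom_le (u := fun k : ℕ ↦ NS (t + D * k)) (by linarith) i
      fun j _ ↦ hnext j ▸ (hwindow j).2.1
  · simpa using hgrowth i

/-- Abstract churn model (Lemma 1): bounds on enters and system size over
intervals of length `D * i`. -/
theorem churn_size_bounds
    (NS : ℝ → ℝ) (E L : ℝ → ℝ → ℝ) (D α : ℝ)
    (hD : 0 < D) (hα0 : 0 < α) (hα1 : α < 1)
    (hNS : ∀ t t', t ≤ t' → NS t' = NS t + E t t' - L t t')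
    (hEnn : ∀ t t', t ≤ t' → 0 ≤ E t t')
    (hLnn : ∀ t t', t ≤ t' → 0 ≤ L t t')
    (hEadd : ∀ t u v, t ≤ u → u ≤ v → E t v = E t u + E u v)
    (hLadd : ∀ t u v, t ≤ u → u ≤ v → L t v = L t u + L u v)
    (hchurn : ∀ t, 0 ≤ t → E t (t + D) + L t (t + D) ≤ α * NS t) :
    ∀ (i : ℕ) (t : ℝ), 0 ≤ t →
      E t (t + D * i) ≤ ((1 + α) ^ i - 1) * NS t ∧
      (1 - α) ^ i * NS t ≤ NS (t + D * i) ∧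
      NS (t + D * i) ≤ (1 + α) ^ i * NS t :=
  churn_size_bounds_general NS E L D α hD hα0 hα1 hNS hEnn hLnn hEadd hchurn
end

section
/- For α > 0, all natural numbers i with i ≤ −1/log₂(1−α), and every time t ≥ 0, the number of servers that leave during (t, t+D·i] is at most (1 − (1−α)^i)·NS(t). -/
/-! Induct on `i`, splitting off the first period `(t, t + D]`. The induction hypothesis at
`t + D` bounds the later departures by `(1 - (1-α)^i) · NS(t+D)`, where
`NS(t+D) = NS(t) + E - L`. Departures `L` of the first period then enter with weight
`(1-α)^i`, arrivals `E` with weight `1 - (1-α)^i`; once `(1-α)^i ≥ 1/2` the arrivals weigh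
no more than the departures, so the churn bound `E + L ≤ α · NS(t)` closes the step. -/

open Real

lemma half_le_pow_of_le_neg_inv_logb {b : ℝ} (hb0 : 0 < b) (hb1 : b < 1) {n : ℕ}
    (hn : (n : ℝ) ≤ -1 / logb 2 b) : 1 / 2 ≤ b ^ n := by
  have hlog : logb 2 b < 0 := logb_neg one_lt_two hb0 hb1
  have hle : (-1 : ℝ) ≤ logb 2 (b ^ n) := by
    rw [logb_pow]
    exact (le_div_iff_of_neg hlog).mp hn
  rw [le_logb_iff_rpow_le one_lt_two (pow_pos hb0 n), rpow_neg_one] at hle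
  simpa using hle

lemma add_le_one_sub_mul_of_churn {ns ns' e l tail α x : ℝ} (hns' : ns' = ns + e - l)
    (he : 0 ≤ e) (hchurn : e + l ≤ α * ns) (hx : 1 / 2 ≤ x) (htail : tail ≤ (1 - x) * ns') :
    l + tail ≤ (1 - (1 - α) * x) * ns := by
  have harrivals : (1 - x) * e ≤ x * e := by nlinarith
  have hweighted : x * (e + l) ≤ x * (α * ns) := mul_le_mul_of_nonneg_left hchurn (by linarith)
  subst hns'
  linarith

section ChurnModel

variable {NS : ℝ → ℝ} {E L : ℝ → ℝ → ℝ} {D α : ℝ}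

lemma leave_self (hLadd : ∀ t u v, t ≤ u → u ≤ v → L t v = L t u + L u v) (t : ℝ) :
    L t t = 0 := by
  linarith [hLadd t t t le_rfl le_rfl]

theorem leave_le_one_sub_pow_mul (hD : 0 ≤ D) (hα0 : 0 ≤ α) (hα1 : α ≤ 1)
    (hNS : ∀ t t', t ≤ t' → NS t' = NS t + E t t' - L t t')
    (hEnn : ∀ t t', t ≤ t' → 0 ≤ E t t')
    (hLadd : ∀ t u v, t ≤ u → u ≤ v → L t v = L t u + L u v)
    (hchurn : ∀ t, 0 ≤ t → E t (t + D) + L t (t + D) ≤ α * NS t) :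
    ∀ n : ℕ, 1 / 2 ≤ (1 - α) ^ n →
      ∀ t, 0 ≤ t → L t (t + D * n) ≤ (1 - (1 - α) ^ n) * NS t := by
  intro n
  induction n with
  | zero =>
    intro _ t _
    simp [leave_self hLadd]
  | succ n ih =>
    intro hpow t ht
    have hpow_n : 1 / 2 ≤ (1 - α) ^ n :=
      hpow.trans (pow_le_pow_of_le_one (by linarith) (by linarith) n.le_succ)
    have htD : t ≤ t + D := by linarith
    have hsplit : L t (t + D * (n + 1 : ℕ)) = L t (t + D) + L (t + D) (t + D + D * n) := by
      rw [← hLadd t (t + D) _ htD (by nlinarith [n.cast_nonneg (α := ℝ)])]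
      push_cast
      ring_nf
    rw [hsplit, pow_succ, mul_comm _ (1 - α)]
    exact add_le_one_sub_mul_of_churn (hNS t (t + D) htD) (hEnn t (t + D) htD) (hchurn t ht)
      hpow_n (ih hpow_n (t + D) (by linarith))

end ChurnModel

theorem churn_leave_bound_general
    (NS : ℝ → ℝ) (E L : ℝ → ℝ → ℝ) (D α : ℝ)
    (hD : 0 < D) (hα0 : 0 < α) (hα1 : α < 1)
    (hNS : ∀ t t', t ≤ t' → NS t' = NS t + E t t' - L t t')
    (hEnn : ∀ t t', t ≤ t' → 0 ≤ E t t')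
    (hLadd : ∀ t u v, t ≤ u → u ≤ v → L t v = L t u + L u v)
    (hchurn : ∀ t, 0 ≤ t → E t (t + D) + L t (t + D) ≤ α * NS t) :
    ∀ (i : ℕ), (i : ℝ) ≤ -1 / Real.logb 2 (1 - α) →
      ∀ t : ℝ, 0 ≤ t → L t (t + D * i) ≤ (1 - (1 - α) ^ i) * NS t := by
  intro i hi
  have hpow : 1 / 2 ≤ (1 - α) ^ i :=
    half_le_pow_of_le_neg_inv_logb (by linarith) (by linarith) hi
  exact leave_le_one_sub_pow_mul hD.le hα0.le hα1.le hNS hEnn hLadd hchurn i hpow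

/-- Abstract churn model (Lemma 2): bound on the number of servers leaving
during an interval of length `D * i`, for `i ≤ -1 / log₂ (1 - α)`. -/
theorem churn_leave_bound
    (NS : ℝ → ℝ) (E L : ℝ → ℝ → ℝ) (D α : ℝ)
    (hD : 0 < D) (hα0 : 0 < α) (hα1 : α < 1)
    (hNS : ∀ t t', t ≤ t' → NS t' = NS t + E t t' - L t t')
    (hEnn : ∀ t t', t ≤ t' → 0 ≤ E t t')
    (hLnn : ∀ t t', t ≤ t' → 0 ≤ L t t')
    (hEadd : ∀ t u v, t ≤ u → u ≤ v → E t v = E t u + E u v)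
    (hLadd : ∀ t u v, t ≤ u → u ≤ v → L t v = L t u + L u v)
    (hchurn : ∀ t, 0 ≤ t → E t (t + D) + L t (t + D) ≤ α * NS t) :
    ∀ (i : ℕ), (i : ℝ) ≤ -1 / Real.logb 2 (1 - α) →
      ∀ t : ℝ, 0 ≤ t → L t (t + D * i) ≤ (1 - (1 - α) ^ i) * NS t :=
  churn_leave_bound_general NS E L D α hD hα0 hα1 hNS hEnn hLadd hchurn
end

section
/- The key inductive step of the leave-bound lemma: if ℓ ≤ α·N, N' = N + e − ℓ with e, ℓ ≥ 0, and 2·(1−α)^i − 1 ≥ 0, then ℓ + (1 − (1−α)^i)·((1+α)·N − 2ℓ) ≤ (1 − (1−α)^{i+1})·N, and moreover N' ≤ (1+α)·N − 2ℓ when e + ℓ ≤ α·N. -/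
theorem leave_bound_slack_eq {R : Type*} [CommRing R] (N ℓ α q : R) :
    (1 - q * (1 - α)) * N - (ℓ + (1 - q) * ((1 + α) * N - 2 * ℓ)) =
      (2 * q - 1) * (α * N - ℓ) := by
  ring

theorem leave_bound_step_le {R : Type*} [CommRing R] [LinearOrder R] [IsStrictOrderedRing R]
    {N ℓ α q : R} (hℓ : ℓ ≤ α * N) (hq : 0 ≤ 2 * q - 1) :
    ℓ + (1 - q) * ((1 + α) * N - 2 * ℓ) ≤ (1 - q * (1 - α)) * N := by
  have hslack : 0 ≤ (2 * q - 1) * (α * N - ℓ) := mul_nonneg hq (sub_nonneg.2 hℓ)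
  rw [← leave_bound_slack_eq] at hslack
  exact sub_nonneg.1 hslack

theorem leave_bound_inductive_step_general
    (N e ℓ N' α : ℝ) (i : ℕ)
    (he : 0 ≤ e)
    (hchurn : e + ℓ ≤ α * N)
    (hhalf : 2 * (1 - α) ^ i - 1 ≥ 0)
    (hN' : N' = N + e - ℓ) :
    ℓ + (1 - (1 - α) ^ i) * ((1 + α) * N - 2 * ℓ) ≤ (1 - (1 - α) ^ (i + 1)) * N ∧
    N' ≤ (1 + α) * N - 2 * ℓ := by
  refine ⟨?_, by linarith⟩
  rw [pow_succ]
  exact leave_bound_step_le (by linarith) hhalf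

/-- Algebraic core of the inductive step of the leave-bound lemma (Lemma 2). -/
theorem leave_bound_inductive_step
    (N e ℓ N' α : ℝ) (i : ℕ)
    (hN : 0 ≤ N) (he : 0 ≤ e) (hℓ : 0 ≤ ℓ)
    (hα0 : 0 < α) (hα1 : α < 1)
    (hchurn : e + ℓ ≤ α * N)
    (hhalf : 2 * (1 - α) ^ i - 1 ≥ 0)
    (hN' : N' = N + e - ℓ) :
    ℓ + (1 - (1 - α) ^ i) * ((1 + α) * N - 2 * ℓ) ≤ (1 - (1 - α) ^ (i + 1)) * N ∧
    N' ≤ (1 + α) * N - 2 * ℓ :=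
  leave_bound_inductive_step_general N e ℓ N' α i he hchurn hhalf hN'
end

section
/- If γ ≥ (1+2f)/((1−α)^3·NS_min) + (1+α)^3/(1−α)^3 − 1 and |S| ≥ NS_min, then γ·(1−α)^3·|S| − [((1+α)^3 − 1)·|S| + (1 − (1−α)^3)·|S| + f] ≥ f + 1. -/
/-! Put `c = (1-α)^3` and `d = (1+α)^3`. Multiplying Constraint (3) by `c` says that every server
of `S` contributes a margin `γ c - (d - c)` of at least `(1 + 2f) / NS_min`, so the `|S| ≥ NS_min`
servers together contribute at least `1 + 2f`, which is exactly the slack needed to beat the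
`f` Byzantine and the `f + 1` required echoes. -/

theorem le_mul_of_div_le_of_le {b m N S : ℝ} (hb : 0 ≤ b) (hN : 0 < N) (hNS : N ≤ S)
    (hm : b / N ≤ m) : b ≤ m * S :=
  calc b ≤ m * N := (div_le_iff₀ hN).1 hm
    _ ≤ m * S := mul_le_mul_of_nonneg_left hNS ((div_nonneg hb hN.le).trans hm)

theorem join_bound_enough_correct_echoes_general
    (α f NSmin γ S : ℝ)
    (hα1 : α < 1) (hf : 1 ≤ f) (hmin : 0 < NSmin)
    (hC3 : γ ≥ (1 + 2 * f) / ((1 - α) ^ 3 * NSmin) + (1 + α) ^ 3 / (1 - α) ^ 3 - 1)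
    (hS : NSmin ≤ S) :
    γ * (1 - α) ^ 3 * S -
      (((1 + α) ^ 3 - 1) * S + (1 - (1 - α) ^ 3) * S + f) ≥ f + 1 := by
  have hc : 0 < (1 - α) ^ 3 := pow_pos (sub_pos.2 hα1) 3
  have hmargin : (1 + 2 * f) / NSmin ≤ γ * (1 - α) ^ 3 - ((1 + α) ^ 3 - (1 - α) ^ 3) := by
    have hC3' : ((1 + 2 * f) / NSmin + (1 + α) ^ 3) / (1 - α) ^ 3 ≤ γ + 1 := by
      rw [add_div, div_div, mul_comm NSmin]
      linarith
    linarith [(div_le_iff₀ hc).1 hC3']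
  have hslack := le_mul_of_div_le_of_le (by linarith) hmin hS hmargin
  linarith

/-- Counting argument of Lemma 6 / Theorem 1: Constraint (3) guarantees at
least `f+1` enter-echoes from correct servers present throughout. -/
theorem join_bound_enough_correct_echoes
    (α f NSmin γ S : ℝ)
    (hα0 : 0 < α) (hα1 : α < 1) (hf : 1 ≤ f) (hmin : 0 < NSmin) (hγ : 0 < γ)
    (hC3 : γ ≥ (1 + 2 * f) / ((1 - α) ^ 3 * NSmin) + (1 + α) ^ 3 / (1 - α) ^ 3 - 1)
    (hS : NSmin ≤ S) :
    γ * (1 - α) ^ 3 * S -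
      (((1 + α) ^ 3 - 1) * S + (1 - (1 - α) ^ 3) * S + f) ≥ f + 1 :=
  join_bound_enough_correct_echoes_general α f NSmin γ S hα1 hf hmin hC3 hS
end

section
/- For every f ∈ ℕ with f ≥ 1 and every α with 0 < α ≤ 0.01, there exist NS_min > 0, γ, β ∈ (0,1) satisfying all seven constraints: (1) α ≤ 1 − 2^{−1/4}; (2) 1 ≤ (1−α)^3·NS_min − 2f; (3) γ ≥ (1+2f)/((1−α)^3·NS_min) + (1+α)^3/(1−α)^3 − 1; (4) γ ≤ (1−α)^3/(1+α)^3 − f/((1+α)^3·NS_min); (5) β ≤ (1−α)^3/(1+α)^2 − f/((1+α)^2·NS_min); (6) β > ((1+α)^5 − 1 + 2f/NS_min)/((1−α)^4 − f/NS_min); (7) β > ((1+α)^3 − (1−α)^3 + 1 + (1+3f)/NS_min)/((2+2α+α²)·(1−α)^2·(1+α)^{−2} − 2f/NS_min). -/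
/-!
The seven constraints involve `NSmin` only through `1 / NSmin` and `f / NSmin`, both at most
`1 / 1000` once `NSmin = 1000 (f + 1)`, and for `0 ≤ α ≤ 0.01` every power `(1 ± α) ^ k` with
`k ≤ 5` lies in `[0.95, 1.06]` (Bernoulli below, monotonicity above). With these crude bounds
each constraint holds for `γ = 0.8` and `β = 0.83` with a wide margin.
-/

lemma two_rpow_neg_quarter_le {y : ℝ} (hy : 0 ≤ y) (h : 1 / 2 ≤ y ^ 4) :
    (2 : ℝ) ^ (-(1 / 4) : ℝ) ≤ y := by
  rw [Real.rpow_neg zero_le_two, ← Real.inv_rpow zero_le_two, one_div,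
    Real.rpow_inv_le_iff_of_pos (by norm_num) hy (by norm_num)]
  rw [one_div] at h
  exact_mod_cast h

lemma one_add_pow_le {α : ℝ} (hα0 : 0 ≤ α) (hα1 : α ≤ 0.01) {k : ℕ} (hk : k ≤ 5) :
    (1 + α) ^ k ≤ 1.06 :=
  calc (1 + α) ^ k ≤ 1.01 ^ k := by gcongr; linarith
    _ ≤ 1.01 ^ 5 := pow_le_pow_right₀ (by norm_num) hk
    _ ≤ 1.06 := by norm_num

lemma le_one_sub_pow {α : ℝ} (hα1 : α ≤ 0.01) {k : ℕ} (hk : k ≤ 5) :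
    0.95 ≤ (1 - α) ^ k :=
  calc (0.95 : ℝ) ≤ 1 + k * (-α) := by
        have : (k : ℝ) ≤ 5 := by exact_mod_cast hk
        nlinarith
    _ ≤ (1 - α) ^ k := by rw [sub_eq_add_neg]; exact one_add_mul_le_pow (by linarith) k

section
variable {α N f : ℝ}

lemma one_le_one_sub_cube_mul_sub (hα1 : α ≤ 0.01) (hN : 1000 ≤ N) (hNf : 1000 * f ≤ N) :
    1 ≤ (1 - α) ^ 3 * N - 2 * f := by
  nlinarith [le_one_sub_pow hα1 (k := 3) (by norm_num)]

lemma join_lower_bound_le (hα0 : 0 ≤ α) (hα1 : α ≤ 0.01) (hN : 1000 ≤ N)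
    (hNf : 1000 * f ≤ N) :
    (1 + 2 * f) / ((1 - α) ^ 3 * N) + (1 + α) ^ 3 / (1 - α) ^ 3 - 1 ≤ 0.8 := by
  have hd := le_one_sub_pow hα1 (k := 3) (by norm_num)
  have hsize : (1 + 2 * f) / ((1 - α) ^ 3 * N) ≤ 0.01 :=
    div_le_of_le_mul₀ (by positivity) (by norm_num) (by nlinarith)
  have hratio : (1 + α) ^ 3 / (1 - α) ^ 3 ≤ 1.06 / 0.95 :=
    div_le_div₀ (by norm_num) (one_add_pow_le hα0 hα1 (by norm_num)) (by norm_num) hd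
  linarith [show (0.01 : ℝ) + 1.06 / 0.95 - 1 ≤ 0.8 by norm_num]

lemma le_one_sub_cube_div_sub (hα0 : 0 ≤ α) (hα1 : α ≤ 0.01) (hN : 1000 ≤ N)
    (hNf : 1000 * f ≤ N) {k : ℕ} (hk : k ≤ 5) :
    0.83 ≤ (1 - α) ^ 3 / (1 + α) ^ k - f / ((1 + α) ^ k * N) := by
  have hfN : f / N ≤ 0.001 := div_le_of_le_mul₀ (by positivity) (by norm_num) (by linarith)
  rw [mul_comm, ← div_div, div_sub_div_same, le_div_iff₀ (by positivity)]
  linarith [one_add_pow_le hα0 hα1 hk, le_one_sub_pow hα1 (k := 3) (by norm_num)]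

lemma rw_lower_bound₁_lt (hα0 : 0 ≤ α) (hα1 : α ≤ 0.01) (hN : 1000 ≤ N)
    (hNf : 1000 * f ≤ N) :
    ((1 + α) ^ 5 - 1 + 2 * f / N) / ((1 - α) ^ 4 - f / N) < 0.83 := by
  have hfN : f / N ≤ 0.001 := div_le_of_le_mul₀ (by positivity) (by norm_num) (by linarith)
  have hd := le_one_sub_pow hα1 (k := 4) (by norm_num)
  rw [div_lt_iff₀ (by linarith), mul_div_assoc]
  linarith [one_add_pow_le hα0 hα1 (k := 5) le_rfl]

lemma rw_lower_bound₂_lt (hα0 : 0 ≤ α) (hα1 : α ≤ 0.01) (hN : 1000 ≤ N)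
    (hNf : 1000 * f ≤ N) :
    ((1 + α) ^ 3 - (1 - α) ^ 3 + 1 + (1 + 3 * f) / N) /
      ((2 + 2 * α + α ^ 2) * (1 - α) ^ 2 * (1 + α)⁻¹ ^ 2 - 2 * f / N) < 0.83 := by
  have h1fN : (1 + 3 * f) / N ≤ 0.004 :=
    div_le_of_le_mul₀ (by positivity) (by norm_num) (by linarith)
  have h2fN : 2 * f / N ≤ 0.002 :=
    div_le_of_le_mul₀ (by positivity) (by norm_num) (by linarith)
  have hden :
      2 * 0.95 * 1.06⁻¹ ≤ (2 + 2 * α + α ^ 2) * (1 - α) ^ 2 * (1 + α)⁻¹ ^ 2 := by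
    rw [inv_pow]
    gcongr
    · nlinarith
    · exact le_one_sub_pow hα1 (by norm_num)
    · exact one_add_pow_le hα0 hα1 (by norm_num)
  rw [div_lt_iff₀ (by norm_num at hden ⊢; linarith)]
  norm_num at hden ⊢
  linarith [one_add_pow_le hα0 hα1 (k := 3) (by norm_num),
    le_one_sub_pow hα1 (k := 3) (by norm_num)]

end

theorem constraints_satisfiable_general
    (f : ℕ) (α : ℝ) (hα0 : 0 < α) (hα1 : α ≤ 0.01) :
    ∃ NSmin γ β : ℝ, 0 < NSmin ∧ 0 < γ ∧ γ < 1 ∧ 0 < β ∧ β < 1 ∧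
      α ≤ 1 - (2 : ℝ) ^ (-(1 / 4) : ℝ) ∧
      1 ≤ (1 - α) ^ 3 * NSmin - 2 * f ∧
      γ ≥ (1 + 2 * f) / ((1 - α) ^ 3 * NSmin) + (1 + α) ^ 3 / (1 - α) ^ 3 - 1 ∧
      γ ≤ (1 - α) ^ 3 / (1 + α) ^ 3 - f / ((1 + α) ^ 3 * NSmin) ∧
      β ≤ (1 - α) ^ 3 / (1 + α) ^ 2 - f / ((1 + α) ^ 2 * NSmin) ∧
      β > ((1 + α) ^ 5 - 1 + 2 * f / NSmin) / ((1 - α) ^ 4 - f / NSmin) ∧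
      β > ((1 + α) ^ 3 - (1 - α) ^ 3 + 1 + (1 + 3 * f) / NSmin) /
            ((2 + 2 * α + α ^ 2) * (1 - α) ^ 2 * (1 + α)⁻¹ ^ 2 - 2 * f / NSmin) := by
  have hf : (0 : ℝ) ≤ f := f.cast_nonneg
  have hN : (1000 : ℝ) ≤ 1000 * (f + 1) := by linarith
  have hNf : 1000 * (f : ℝ) ≤ 1000 * (f + 1) := by linarith
  refine ⟨1000 * (f + 1), 0.8, 0.83, by positivity, by norm_num, by norm_num, by norm_num,
    by norm_num, ?_, one_le_one_sub_cube_mul_sub hα1 hN hNf,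
    join_lower_bound_le hα0.le hα1 hN hNf,
    le_trans (by norm_num) (le_one_sub_cube_div_sub hα0.le hα1 hN hNf (by norm_num)),
    le_one_sub_cube_div_sub hα0.le hα1 hN hNf (by norm_num),
    rw_lower_bound₁_lt hα0.le hα1 hN hNf, rw_lower_bound₂_lt hα0.le hα1 hN hNf⟩
  have h4 := le_one_sub_pow hα1 (k := 4) (by norm_num)
  linarith [two_rpow_neg_quarter_le (by linarith) (by linarith : 1 / 2 ≤ (1 - α) ^ 4)]

/-- Satisfiability of the seven constraints for any `f ≥ 1` and small churn
rate `α ≤ 0.01`. -/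
theorem constraints_satisfiable
    (f : ℕ) (hf : 1 ≤ f) (α : ℝ) (hα0 : 0 < α) (hα1 : α ≤ 0.01) :
    ∃ NSmin γ β : ℝ, 0 < NSmin ∧ 0 < γ ∧ γ < 1 ∧ 0 < β ∧ β < 1 ∧
      α ≤ 1 - (2 : ℝ) ^ (-(1 / 4) : ℝ) ∧
      1 ≤ (1 - α) ^ 3 * NSmin - 2 * f ∧
      γ ≥ (1 + 2 * f) / ((1 - α) ^ 3 * NSmin) + (1 + α) ^ 3 / (1 - α) ^ 3 - 1 ∧
      γ ≤ (1 - α) ^ 3 / (1 + α) ^ 3 - f / ((1 + α) ^ 3 * NSmin) ∧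
      β ≤ (1 - α) ^ 3 / (1 + α) ^ 2 - f / ((1 + α) ^ 2 * NSmin) ∧
      β > ((1 + α) ^ 5 - 1 + 2 * f / NSmin) / ((1 - α) ^ 4 - f / NSmin) ∧
      β > ((1 + α) ^ 3 - (1 - α) ^ 3 + 1 + (1 + 3 * f) / NSmin) /
            ((2 + 2 * α + α ^ 2) * (1 - α) ^ 2 * (1 + α)⁻¹ ^ 2 - 2 * f / NSmin) :=
  constraints_satisfiable_general f α hα0 hα1
end
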